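/- Let 𝒢 ≤ S_n be a transitive subgroup, let p ∈ [1,∞), let F ∈ C(ℝ^n; ℝ) be 𝒢 invariant, and let g : ℝ^n → ℝ be Lipschitz continuous, 𝒢 invariant, and satisfy F(ℝ^n) ⊂ g(ℝ^n). Then for every compact K ⊂ ℝ^n and every ε > 0 there exists a continuous 𝒢 equivariant mapping φ ∈ C(ℝ^n; ℝ^n) such that ‖F − g ∘ φ‖_{L^p(K)} ≤ ε. -/

import Mathlib

open MeasureTheory

namespace SymDyn

/-- Action of a permutation on ℝⁿ by permuting coordinates: `(𝔤(x))_i = x_{𝔤(i)}`. -/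
def permAct {n : ℕ} (g : Equiv.Perm (Fin n)) (x : Fin n → ℝ) : Fin n → ℝ :=
  fun i => x (g i)

/-- `F` is 𝒢 invariant. -/
def IsInvariant {n : ℕ} {α : Type*} (G : Subgroup (Equiv.Perm (Fin n)))
    (F : (Fin n → ℝ) → α) : Prop :=
  ∀ g ∈ G, ∀ x, F (permAct g x) = F x

/-- `f` is 𝒢 equivariant. -/
def IsEquivariant {n : ℕ} (G : Subgroup (Equiv.Perm (Fin n)))
    (f : (Fin n → ℝ) → (Fin n → ℝ)) : Prop :=
  ∀ g ∈ G, ∀ x, f (permAct g x) = permAct g (f x)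

/-- `G` is a transitive permutation group on indices. -/
def IsTransitive {n : ℕ} (G : Subgroup (Equiv.Perm (Fin n))) : Prop :=
  ∀ i j : Fin n, ∃ g ∈ G, g i = j

/-- Lipschitz with some (finite) constant. -/
def IsLip {E F : Type*} [PseudoEMetricSpace E] [PseudoEMetricSpace F] (f : E → F) : Prop :=
  ∃ K : NNReal, LipschitzWith K f

/-- `φ` is the time-`T` flow map of the ODE `ż = f(z)`. -/
def IsFlowMap {n : ℕ} (f : (Fin n → ℝ) → (Fin n → ℝ)) (T : ℝ)
    (φ : (Fin n → ℝ) → (Fin n → ℝ)) : Prop :=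
  ∀ x : Fin n → ℝ, ∃ z : ℝ → (Fin n → ℝ),
    z 0 = x ∧ (∀ t : ℝ, HasDerivAt z (f (z t)) t) ∧ φ x = z T

/-- Attainable set of a control family: all finite compositions
`φ(f₁,τ₁) ∘ ⋯ ∘ φ(f_k,τ_k)` of flow maps of members of `𝓕`. -/
def AttainSet {n : ℕ} (𝓕 : Set ((Fin n → ℝ) → (Fin n → ℝ))) :
    Set ((Fin n → ℝ) → (Fin n → ℝ)) :=
  { φ | ∃ k : ℕ, 1 ≤ k ∧
      ∃ (fs : Fin k → (Fin n → ℝ) → (Fin n → ℝ)) (τ : Fin k → ℝ)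
        (ψ : Fin k → (Fin n → ℝ) → (Fin n → ℝ)),
        (∀ i, fs i ∈ 𝓕 ∧ 0 ≤ τ i ∧ IsFlowMap (fs i) (τ i) (ψ i)) ∧
        φ = (List.ofFn ψ).foldr (· ∘ ·) id }

/-- Dynamical hypothesis space `H_ode(𝓕,𝓖) = {g ∘ φ : g ∈ 𝓖, φ ∈ A_𝓕}`. -/
def Hode {n : ℕ} {β : Type*} (𝓕 : Set ((Fin n → ℝ) → (Fin n → ℝ)))
    (𝓖 : Set ((Fin n → ℝ) → β)) : Set ((Fin n → ℝ) → β) :=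
  { F | ∃ g ∈ 𝓖, ∃ φ ∈ AttainSet 𝓕, F = g ∘ φ }

/-- Closure of a family of functions in the topology of compact convergence. -/
def ccClosure {α F : Type*} [TopologicalSpace α] [NormedAddCommGroup F]
    (S : Set (α → F)) : Set (α → F) :=
  { h | ∀ K : Set α, IsCompact K → ∀ ε : ℝ, 0 < ε → ∃ f ∈ S, ∀ x ∈ K, ‖f x - h x‖ ≤ ε }

/-- `CH̄(S)`: closure of the convex hull in the topology of compact convergence. -/
def CHbar {α F : Type*} [TopologicalSpace α] [NormedAddCommGroup F] [NormedSpace ℝ F]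
    (S : Set (α → F)) : Set (α → F) :=
  ccClosure (convexHull ℝ S)

/-- The `coor` operator: scalar functions `f₁` such that for some `𝔱_i ∈ G` with
`𝔱_i(1) = i`, the assembled mapping `[f₁∘𝔱_1, …, f₁∘𝔱_n]` belongs to `𝓕`. -/
def coorFam {n : ℕ} [NeZero n] (G : Subgroup (Equiv.Perm (Fin n)))
    (𝓕 : Set ((Fin n → ℝ) → (Fin n → ℝ))) : Set ((Fin n → ℝ) → ℝ) :=
  { f1 | ∃ t : Fin n → Equiv.Perm (Fin n),
      (∀ i, t i ∈ G ∧ t i 0 = i) ∧ (fun x i => f1 (permAct (t i) x)) ∈ 𝓕 }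

/-- One-dimensional well function: Lipschitz with zero set a nondegenerate
closed bounded interval. -/
def IsWell1D (h : ℝ → ℝ) : Prop :=
  IsLip h ∧ ∃ a b : ℝ, a < b ∧ {x : ℝ | h x = 0} = Set.Icc a b

/-- Symmetric invariant well function. -/
def IsSymWell {n : ℕ} (τ : (Fin n → ℝ) → ℝ) : Prop :=
  IsLip τ ∧
  (∀ g : Equiv.Perm (Fin n), ∀ x, τ (permAct g x) = τ x) ∧
  (∃ I : Set ℝ, I.Nonempty ∧ I.OrdConnected ∧ Bornology.IsBounded I ∧
      ∀ x : Fin n → ℝ, (∀ i, x i ∈ I) → τ x = 0) ∧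
  (∀ i : Fin n, ∀ b : ℝ, 0 < b → ∃ a : ℝ, 0 < a ∧
      ∀ x : Fin n → ℝ, a < |x i| → (∀ j, j ≠ i → |x j| < b) → τ x ≠ 0)

/-- A point is in general position iff its coordinates are pairwise distinct. -/
def GeneralPos {n : ℕ} (x : Fin n → ℝ) : Prop := Function.Injective x

/-- The similarity `s̄(x,y)` is nonzero: at least one of the two points is in
general position, and some coordinate value is shared. -/
def SimilarPos {n : ℕ} (x y : Fin n → ℝ) : Prop :=
  (GeneralPos x ∨ GeneralPos y) ∧ ∃ i j : Fin n, x i = y j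

/-- The perturbation property of a control family. -/
def PerturbProp {n : ℕ} (𝓕 : Set ((Fin n → ℝ) → (Fin n → ℝ))) : Prop :=
  ∀ x y : Fin n → ℝ, SimilarPos x y →
    ∃ f ∈ 𝓕, ∃ u : ℝ → ℝ, Continuous u ∧ StrictMono u ∧
      ∃ i : Fin n, x i = y i ∧ f (fun j => u (x j)) i ≠ f (fun j => u (y j)) i

/-- Cross section `Q_𝔤 = {x : x_{𝔤⁻¹(1)} > x_{𝔤⁻¹(2)} > ⋯ > x_{𝔤⁻¹(n)}}`. -/
def crossSec {n : ℕ} (g : Equiv.Perm (Fin n)) : Set (Fin n → ℝ) :=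
  { x | ∀ i j : Fin n, i < j → x (g⁻¹ j) < x (g⁻¹ i) }

/-- `A` is a (right) transversal of the subgroup `G`. -/
def IsTransversal {n : ℕ} (G : Subgroup (Equiv.Perm (Fin n)))
    (A : Set (Equiv.Perm (Fin n))) : Prop :=
  (∀ a ∈ A, ∀ b ∈ A, a ≠ b → a * b⁻¹ ∉ G) ∧
  (∀ b : Equiv.Perm (Fin n), ∃ a ∈ A, a * b⁻¹ ∈ G)

/-- Cross section of a transversal: `Q_A = ⋃_{𝔞 ∈ A} Q_𝔞`. -/
def crossSecA {n : ℕ} (A : Set (Equiv.Perm (Fin n))) : Set (Fin n → ℝ) :=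
  ⋃ a ∈ A, crossSec a

/-- `𝔞` and `𝔟` are directly `𝓕` connected. -/
def DirectlyConn {n : ℕ} (𝓕 : Set ((Fin n → ℝ) → (Fin n → ℝ)))
    (a b : Equiv.Perm (Fin n)) : Prop :=
  ∃ i j : Fin n, i ≠ j ∧ a = Equiv.swap i j * b ∧
    ∃ z ∈ frontier (crossSec a) ∩ frontier (crossSec b), ∃ f ∈ 𝓕, f z i ≠ f z j

/-- `𝔞` and `𝔟` are `𝓕` connected (joined by a chain of directly connected elements). -/
def ConnIn {n : ℕ} (𝓕 : Set ((Fin n → ℝ) → (Fin n → ℝ)))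
    (a b : Equiv.Perm (Fin n)) : Prop :=
  ∃ (s : ℕ) (g : Fin (s + 1) → Equiv.Perm (Fin n)), g 0 = a ∧ g (Fin.last s) = b ∧
    ∀ i : Fin s, DirectlyConn 𝓕 (g i.castSucc) (g i.succ)

/-- `𝓕` resolves `G`: it has the perturbation property and is `G` transversally
transitive. -/
def Resolves {n : ℕ} (G : Subgroup (Equiv.Perm (Fin n)))
    (𝓕 : Set ((Fin n → ℝ) → (Fin n → ℝ))) : Prop :=
  PerturbProp 𝓕 ∧ ∃ A : Set (Equiv.Perm (Fin n)), IsTransversal G A ∧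
    ∀ a ∈ A, ∀ b ∈ A, a ≠ b → ConnIn 𝓕 a b

/-- A finite point set is `G` distinct: the `G` orbits of its points are distinct. -/
def GDistinct {n M : ℕ} (G : Subgroup (Equiv.Perm (Fin n)))
    (x : Fin M → Fin n → ℝ) : Prop :=
  ∀ g ∈ G, ∀ i j : Fin M, permAct g (x i) = x j → g = 1 ∧ i = j

/-- `x ≺ y`: every coordinate of `x` is below every coordinate of `y`. -/
def precLT {n : ℕ} (x y : Fin n → ℝ) : Prop := ∀ i j : Fin n, x i < y j

/-- A finite point set is partially ordered. -/
def PartiallyOrderedPts {n m : ℕ} (x : Fin m → Fin n → ℝ) : Prop :=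
  ∀ i j : Fin m,
    ((j < i ∧ GeneralPos (x i) ∧ GeneralPos (x j)) ∨
      (¬ GeneralPos (x i) ∧ GeneralPos (x j))) → precLT (x i) (x j)

/-- A finite point set is well perturbed: whenever two (indexed) coordinate values
coincide nontrivially, both points fail to be in general position. -/
def WellPerturbed {n m : ℕ} (y : Fin m → Fin n → ℝ) : Prop :=
  ∀ (j l : Fin m) (i k : Fin n), (i, j) ≠ (k, l) → y j i = y l k →
    ¬ GeneralPos (y j) ∧ ¬ GeneralPos (y l)

/-- Composition of a finite family of maps, applying the index-`0` map first. -/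
def foldComp {E : Type*} {s : ℕ} (Φ : Fin s → E → E) : E → E :=
  (List.ofFn Φ).foldl (fun acc f => f ∘ acc) id

/-- `t` is a partition `0 = t₀ < t₁ < ⋯ < t_s = T` of `[0,T]`. -/
def IsPartition {s : ℕ} (T : ℝ) (t : Fin (s + 1) → ℝ) : Prop :=
  StrictMono t ∧ t 0 = 0 ∧ t (Fin.last s) = T

/-- Discrete flow of a one-step numerical integrator `Φ` over a partition. -/
def discFlow {n : ℕ} (Φ : ℝ → (Fin n → ℝ) → (Fin n → ℝ)) {s : ℕ}
    (t : Fin (s + 1) → ℝ) : (Fin n → ℝ) → (Fin n → ℝ) :=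
  foldComp (fun i : Fin s => Φ (t i.succ - t i.castSucc))

/-- Convergence of a numerical scheme `Φ` for the vector field `f`. -/
def ConvergentScheme {n : ℕ} (f : (Fin n → ℝ) → (Fin n → ℝ))
    (Φ : ℝ → (Fin n → ℝ) → (Fin n → ℝ)) : Prop :=
  (∀ K : Set (Fin n → ℝ), IsCompact K → ∀ ε : ℝ, 0 < ε → ∃ δ > (0 : ℝ),
      ∀ τ : ℝ, 0 < τ → τ < δ → ∀ x ∈ K, ‖Φ τ x - x‖ ≤ ε) ∧
  (∀ T : ℝ, ∀ φT : (Fin n → ℝ) → (Fin n → ℝ), IsFlowMap f T φT →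
      ∀ K : Set (Fin n → ℝ), IsCompact K → ∀ ε : ℝ, 0 < ε → ∃ δ > (0 : ℝ),
      ∀ (s : ℕ) (t : Fin (s + 1) → ℝ), IsPartition T t →
        (∀ i : Fin s, t i.succ - t i.castSucc < δ) →
        ∀ x ∈ K, ‖discFlow Φ t x - φT x‖ ≤ ε) ∧
  (∃ g : (Fin n → ℝ) → ℝ → ℝ, Continuous (fun q : (Fin n → ℝ) × ℝ => g q.1 q.2) ∧
      ∀ T : ℝ, 0 ≤ T → ∀ (s : ℕ) (t : Fin (s + 1) → ℝ), IsPartition T t →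
        ∀ x, ‖discFlow Φ t x‖ ≤ g x T)

/-- `L^p` error of `f` on the region `K` (with respect to Lebesgue measure). -/
noncomputable def lpErr {n : ℕ} {β : Type*} [NormedAddCommGroup β]
    (p : ℝ) (K : Set (Fin n → ℝ)) (f : (Fin n → ℝ) → β) : ENNReal :=
  eLpNorm f (ENNReal.ofReal p) (volume.restrict K)

/-- Universal approximation property in `L^p` on compact sets. -/
def HasUAP {n : ℕ} {β : Type*} [NormedAddCommGroup β]
    (p : ℝ) (H : Set ((Fin n → ℝ) → β)) : Prop :=
  ∀ F : (Fin n → ℝ) → β, Continuous F → ∀ K : Set (Fin n → ℝ), IsCompact K →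
    ∀ ε : ℝ, 0 < ε → ∃ Fh ∈ H, lpErr p K (fun x => F x - Fh x) ≤ ENNReal.ofReal ε

/-- `G` universal approximation property in `L^p` on compact sets. -/
def HasGUAP {n : ℕ} {β : Type*} [NormedAddCommGroup β]
    (G : Subgroup (Equiv.Perm (Fin n))) (p : ℝ) (H : Set ((Fin n → ℝ) → β)) : Prop :=
  ∀ F : (Fin n → ℝ) → β, Continuous F → IsInvariant G F →
    ∀ K : Set (Fin n → ℝ), IsCompact K →
    ∀ ε : ℝ, 0 < ε → ∃ Fh ∈ H, lpErr p K (fun x => F x - Fh x) ≤ ENNReal.ofReal ε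

/-- Discretized attainable set obtained from a numerical scheme `sch`. -/
def discAttain {n : ℕ} (𝓕 : Set ((Fin n → ℝ) → (Fin n → ℝ)))
    (sch : ((Fin n → ℝ) → (Fin n → ℝ)) → ℝ → (Fin n → ℝ) → (Fin n → ℝ)) :
    Set ((Fin n → ℝ) → (Fin n → ℝ)) :=
  { φ | ∃ l : ℕ, 1 ≤ l ∧ ∃ (fs : Fin l → (Fin n → ℝ) → (Fin n → ℝ)) (t : Fin (l + 1) → ℝ),
      t 0 = 0 ∧ StrictMono t ∧ (∀ i, fs i ∈ 𝓕) ∧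
      φ = foldComp (fun i : Fin l => sch (fs i) (t i.succ - t i.castSucc)) }

/-!
Sort the coordinates of `x`: if `σ = Tuple.sort x`, right-coset representatives of `G` provide
`τ_σ ∈ G` with `τ_{kσ} = τ_σ k⁻¹` for `k ∈ G`. Gluing the maps `x ↦ τ_σ • Y x` with continuous
weights supported on the chambers `{x ∘ σ strictly increasing}` therefore turns any continuous
`G`-invariant `Y : ℝⁿ → ℝⁿ` into a continuous `G`-equivariant map `φ` with `‖φ‖ ≤ ‖Y‖`, and
`g ∘ φ = g ∘ Y` wherever the coordinates of `x` are `θ`-separated, since there only the chamber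
of `x` contributes, with weight `1`.

Take `Y = γ ∘ F`, where `γ : ℝ → ℝⁿ` is a broken line through points `y k` with `g (y k)` in the
`k`-th cell of a grid of mesh `η`, switching on intervals of length `θ` at the grid points; then
`g ∘ γ` is within `η` of the identity on `range g` away from the grid. With the grid chosen off
the atoms of the image of `vol|K` under `F`, the exceptional set (near-collisions of coordinates,
or `F x` near a grid point) has measure tending to `0` with `θ`, while `‖φ‖` is bounded on `K`
independently of `θ`; splitting the `Lᵖ` norm over this set gives the bound.
-/

open Filter Topology Metric Set
open scoped ENNReal

section Ramp

noncomputable def ramp (θ s : ℝ) : ℝ := max 0 (min 1 (s / θ))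

lemma continuous_ramp (θ : ℝ) : Continuous (ramp θ) :=
  continuous_const.max (continuous_const.min (continuous_id.div_const θ))

lemma ramp_nonneg (θ s : ℝ) : 0 ≤ ramp θ s := le_max_left _ _

lemma ramp_le_one (θ s : ℝ) : ramp θ s ≤ 1 := max_le zero_le_one (min_le_left _ _)

lemma ramp_eq_zero_of_nonpos {θ s : ℝ} (hθ : 0 ≤ θ) (hs : s ≤ 0) : ramp θ s = 0 :=
  max_eq_left ((min_le_right _ _).trans (div_nonpos_of_nonpos_of_nonneg hs hθ))

lemma ramp_eq_one_of_le {θ s : ℝ} (hθ : 0 < θ) (hs : θ ≤ s) : ramp θ s = 1 := by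
  rw [ramp, min_eq_left ((one_le_div hθ).mpr hs), max_eq_right zero_le_one]

end Ramp

section RampCurve

variable {E : Type*} [NormedAddCommGroup E] [NormedSpace ℝ E]

noncomputable def rampCurve (θ : ℝ) (b : ℕ → ℝ) (y : ℕ → E) (N : ℕ) (t : ℝ) : E :=
  y 0 + ∑ j ∈ Finset.range N, ramp θ (t - b j) • (y (j + 1) - y j)

lemma continuous_rampCurve (θ : ℝ) (b : ℕ → ℝ) (y : ℕ → E) (N : ℕ) :
    Continuous (rampCurve θ b y N) :=
  continuous_const.add <| continuous_finsetSum _ fun _ _ =>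
    ((continuous_ramp θ).comp (continuous_sub_right _)).smul continuous_const

lemma norm_rampCurve_le (θ : ℝ) (b : ℕ → ℝ) (y : ℕ → E) (N : ℕ) (t : ℝ) :
    ‖rampCurve θ b y N t‖ ≤ ‖y 0‖ + ∑ j ∈ Finset.range N, ‖y (j + 1) - y j‖ := by
  refine (norm_add_le _ _).trans (add_le_add_right ?_ _)
  refine (norm_sum_le _ _).trans (Finset.sum_le_sum fun j _ => ?_)
  rw [norm_smul, Real.norm_of_nonneg (ramp_nonneg _ _)]
  exact mul_le_of_le_one_left (norm_nonneg _) (ramp_le_one _ _)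

lemma rampCurve_eq {θ : ℝ} (hθ : 0 < θ) {b : ℕ → ℝ} (y : ℕ → E) {N k : ℕ} (hk : k ≤ N)
    {t : ℝ} (hlo : ∀ j < k, θ ≤ t - b j) (hhi : ∀ j, k ≤ j → t ≤ b j) :
    rampCurve θ b y N t = y k := by
  have hbelow : ∑ j ∈ Finset.range k, ramp θ (t - b j) • (y (j + 1) - y j) = y k - y 0 := by
    rw [← Finset.sum_range_sub y k]
    exact Finset.sum_congr rfl fun j hj => by
      rw [ramp_eq_one_of_le hθ (hlo j (Finset.mem_range.mp hj)), one_smul]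
  have habove : ∑ j ∈ Finset.Ico k N, ramp θ (t - b j) • (y (j + 1) - y j) = 0 :=
    Finset.sum_eq_zero fun j hj => by
      rw [ramp_eq_zero_of_nonpos hθ.le (sub_nonpos.mpr (hhi j (Finset.mem_Ico.mp hj).1)),
        zero_smul]
  rw [rampCurve, ← Finset.sum_range_add_sum_Ico _ hk, hbelow, habove]
  abel

lemma exists_mem_Ioo_forall_add_mul_notMem {S : Set ℝ} (hS : S.Countable) (r c : ℝ) :
    ∃ a ∈ Ioo (c - 1) c, ∀ k : ℕ, a + k * r ∉ S := by
  have hT : (⋃ k : ℕ, (fun s => s - k * r) '' S).Countable :=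
    countable_iUnion fun _ => hS.image _
  obtain ⟨a, haI, haT⟩ := (hT.dense_compl ℝ).inter_open_nonempty _ isOpen_Ioo
    (nonempty_Ioo.mpr (sub_one_lt c))
  refine ⟨a, haI, fun k hk => haT (mem_iUnion.mpr ⟨k, _, hk, add_sub_cancel_right a _⟩)⟩

lemma exists_rampCurve_approx (g : E → ℝ) {S : Set ℝ} (hS : S.Countable) (C : ℝ) {η : ℝ}
    (hη : 0 < η) :
    ∃ D : Finset ℝ, (∀ d ∈ D, d ∉ S) ∧ ∃ R, ∀ θ > 0, ∃ γ : ℝ → E, Continuous γ ∧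
      (∀ t, ‖γ t‖ ≤ R) ∧
      ∀ t ∈ range g, |t| ≤ C → (∀ d ∈ D, θ < |t - d|) → |t - g (γ t)| ≤ η := by
  obtain ⟨a, ha, haS⟩ := exists_mem_Ioo_forall_add_mul_notMem hS η (-C)
  set N := ⌊(C - a) / η⌋₊ + 1
  have hcell : ∀ k : ℕ, ∃ z : E, ∀ t ∈ range g, t ∈ Ico (a + k * η) (a + k * η + η) →
      g z ∈ Ico (a + k * η) (a + k * η + η) := by
    intro k
    by_cases h : ∃ t ∈ range g, t ∈ Ico (a + k * η) (a + k * η + η)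
    · obtain ⟨_, ⟨z, rfl⟩, hz⟩ := h
      exact ⟨z, fun _ _ _ => hz⟩
    · exact ⟨0, fun t ht ht' => absurd ⟨t, ht, ht'⟩ h⟩
  choose y hy using hcell
  refine ⟨(Finset.range N).image fun j => a + (j + 1 : ℕ) * η, ?_, _, fun θ hθ =>
    ⟨rampCurve θ (fun j => a + (j + 1 : ℕ) * η) y N, continuous_rampCurve _ _ _ _,
      norm_rampCurve_le _ _ _ _, ?_⟩⟩
  · simp only [Finset.mem_image]
    rintro _ ⟨j, -, rfl⟩
    exact haS (j + 1)
  intro t ht htC htD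
  have hta : 0 ≤ (t - a) / η := div_nonneg (by linarith [neg_abs_le t, ha.2]) hη.le
  set k := ⌊(t - a) / η⌋₊
  have hk : t ∈ Ico (a + k * η) (a + k * η + η) := by
    constructor
    · linarith [(le_div_iff₀ hη).mp (Nat.floor_le hta)]
    · linarith [(div_lt_iff₀ hη).mp (Nat.lt_floor_add_one ((t - a) / η))]
  have hkN : k < N := Nat.lt_succ_of_le (Nat.floor_le_floor
    (div_le_div_of_nonneg_right (by linarith [le_abs_self t]) hη.le))
  rw [rampCurve_eq hθ y hkN.le (fun j hj => ?_) (fun j hj => ?_)]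
  · have := hy k t ht hk
    rw [abs_le]
    constructor <;> linarith [hk.1, hk.2, this.1, this.2]
  · have hjk : ((j + 1 : ℕ) : ℝ) * η ≤ k * η := by gcongr; exact_mod_cast hj
    have := htD _ (Finset.mem_image_of_mem _ (Finset.mem_range.mpr (hj.trans hkN)))
    rw [abs_of_nonneg (by linarith [hk.1])] at this
    exact this.le
  · have hjk : ((k + 1 : ℕ) : ℝ) * η ≤ ((j + 1 : ℕ) : ℝ) * η := by gcongr
    push_cast at hjk ⊢
    linarith [hk.2]

end RampCurve

section CosetShift

variable {α : Type*} [Group α] (G : Subgroup α)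

noncomputable def cosetShift (σ : α) : α :=
  (Quotient.mk (QuotientGroup.rightRel G) σ).out * σ⁻¹

lemma cosetShift_mem (σ : α) : cosetShift G σ ∈ G := by
  have h := QuotientGroup.rightRel_apply.mp (Quotient.mk_out (s := QuotientGroup.rightRel G) σ)
  simpa [cosetShift] using inv_mem h

lemma cosetShift_mul {k : α} (hk : k ∈ G) (σ : α) :
    cosetShift G (k * σ) = cosetShift G σ * k⁻¹ := by
  have h : Quotient.mk (QuotientGroup.rightRel G) (k * σ) = Quotient.mk _ σ :=
    Quotient.sound (QuotientGroup.rightRel_apply.mpr (by simpa using inv_mem hk))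
  simp [cosetShift, h, mul_assoc]

end CosetShift

section Chamber

variable {n : ℕ}

lemma permAct_mul (a b : Equiv.Perm (Fin n)) (x : Fin n → ℝ) :
    permAct (a * b) x = permAct b (permAct a x) := rfl

lemma permAct_sum_smul {ι : Type*} (s : Finset ι) (k : Equiv.Perm (Fin n)) (c : ι → ℝ)
    (v : ι → Fin n → ℝ) :
    permAct k (∑ i ∈ s, c i • v i) = ∑ i ∈ s, c i • permAct k (v i) := by
  ext j
  simp [permAct, Finset.sum_apply]

lemma continuous_permAct (k : Equiv.Perm (Fin n)) : Continuous (permAct k) :=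
  continuous_pi fun i => continuous_apply (k i)

lemma norm_permAct_le (k : Equiv.Perm (Fin n)) (x : Fin n → ℝ) : ‖permAct k x‖ ≤ ‖x‖ :=
  (pi_norm_le_iff_of_nonneg (norm_nonneg x)).mpr fun i => norm_le_pi_norm x (k i)

noncomputable def chamberWeight (δ : ℝ) (σ : Equiv.Perm (Fin n)) (x : Fin n → ℝ) : ℝ :=
  ∏ ij ∈ Finset.univ.filter (fun ij : Fin n × Fin n => ij.1 < ij.2),
    ramp δ (x (σ ij.2) - x (σ ij.1))

lemma continuous_chamberWeight (δ : ℝ) (σ : Equiv.Perm (Fin n)) :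
    Continuous (chamberWeight δ σ) :=
  continuous_finsetProd _ fun _ _ =>
    (continuous_ramp δ).comp ((continuous_apply _).sub (continuous_apply _))

lemma chamberWeight_nonneg (δ : ℝ) (σ : Equiv.Perm (Fin n)) (x : Fin n → ℝ) :
    0 ≤ chamberWeight δ σ x :=
  Finset.prod_nonneg fun _ _ => ramp_nonneg _ _

lemma chamberWeight_le_one (δ : ℝ) (σ : Equiv.Perm (Fin n)) (x : Fin n → ℝ) :
    chamberWeight δ σ x ≤ 1 :=
  Finset.prod_le_one (fun _ _ => ramp_nonneg _ _) fun _ _ => ramp_le_one _ _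

lemma chamberWeight_permAct (δ : ℝ) (σ k : Equiv.Perm (Fin n)) (x : Fin n → ℝ) :
    chamberWeight δ σ (permAct k x) = chamberWeight δ (k * σ) x := rfl

lemma strictMono_of_chamberWeight_ne_zero {δ : ℝ} (hδ : 0 ≤ δ) {σ : Equiv.Perm (Fin n)}
    {x : Fin n → ℝ} (h : chamberWeight δ σ x ≠ 0) : StrictMono (x ∘ σ) := by
  intro i j hij
  by_contra hle
  exact h (Finset.prod_eq_zero (i := (i, j)) (by simpa using hij)
    (ramp_eq_zero_of_nonpos hδ (sub_nonpos.mpr (not_lt.mp hle))))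

lemma chamberWeight_eq_zero_of_ne_sort {δ : ℝ} (hδ : 0 ≤ δ) {σ : Equiv.Perm (Fin n)}
    {x : Fin n → ℝ} (hσ : σ ≠ Tuple.sort x) : chamberWeight δ σ x = 0 := by
  by_contra h
  have hmono := strictMono_of_chamberWeight_ne_zero hδ h
  exact hσ (Tuple.eq_sort_iff.mpr ⟨hmono.monotone, fun i j hij heq => absurd heq (hmono hij).ne⟩)

lemma chamberWeight_sort {δ : ℝ} (hδ : 0 < δ) {x : Fin n → ℝ}
    (hx : ∀ i j, i ≠ j → δ ≤ |x i - x j|) : chamberWeight δ (Tuple.sort x) x = 1 := by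
  refine Finset.prod_eq_one fun ij hij => ramp_eq_one_of_le hδ ?_
  have hlt : ij.1 < ij.2 := by simpa using hij
  have hsep := hx _ _ ((Tuple.sort x).injective.ne hlt.ne')
  have hmono : x (Tuple.sort x ij.1) ≤ x (Tuple.sort x ij.2) := Tuple.monotone_sort x hlt.le
  rwa [abs_of_nonneg (sub_nonneg.mpr hmono)] at hsep

end Chamber

section EquivariantLift

variable {n : ℕ} (G : Subgroup (Equiv.Perm (Fin n))) (δ : ℝ) (Y : (Fin n → ℝ) → Fin n → ℝ)

noncomputable def equivariantLift (x : Fin n → ℝ) : Fin n → ℝ :=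
  ∑ σ : Equiv.Perm (Fin n), chamberWeight δ σ x • permAct (cosetShift G σ) (Y x)

lemma continuous_equivariantLift (hY : Continuous Y) : Continuous (equivariantLift G δ Y) :=
  continuous_finsetSum _ fun σ _ =>
    (continuous_chamberWeight δ σ).smul ((continuous_permAct _).comp hY)

lemma isEquivariant_equivariantLift (hY : IsInvariant G Y) :
    IsEquivariant G (equivariantLift G δ Y) := by
  intro k hk x
  simp only [equivariantLift, hY k hk x, chamberWeight_permAct, permAct_sum_smul]
  refine Fintype.sum_equiv (Equiv.mulLeft k) _ _ fun σ => ?_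
  rw [Equiv.coe_mulLeft, cosetShift_mul G hk, ← permAct_mul, inv_mul_cancel_right]

variable {δ}

lemma equivariantLift_eq_sort (hδ : 0 ≤ δ) (x : Fin n → ℝ) :
    equivariantLift G δ Y x =
      chamberWeight δ (Tuple.sort x) x • permAct (cosetShift G (Tuple.sort x)) (Y x) :=
  Fintype.sum_eq_single _ fun σ hσ => by rw [chamberWeight_eq_zero_of_ne_sort hδ hσ, zero_smul]

lemma norm_equivariantLift_le (hδ : 0 ≤ δ) (x : Fin n → ℝ) :
    ‖equivariantLift G δ Y x‖ ≤ ‖Y x‖ := by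
  rw [equivariantLift_eq_sort G Y hδ, norm_smul, Real.norm_of_nonneg (chamberWeight_nonneg _ _ _)]
  exact (mul_le_of_le_one_left (norm_nonneg _) (chamberWeight_le_one _ _ _)).trans
    (norm_permAct_le _ _)

lemma apply_equivariantLift {β : Type*} {g : (Fin n → ℝ) → β} (hg : IsInvariant G g)
    (hδ : 0 < δ) {x : Fin n → ℝ} (hx : ∀ i j, i ≠ j → δ ≤ |x i - x j|) :
    g (equivariantLift G δ Y x) = g (Y x) := by
  rw [equivariantLift_eq_sort G Y hδ.le, chamberWeight_sort hδ hx, one_smul,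
    hg _ (cosetShift_mem G _)]

end EquivariantLift

section Measure

lemma volume_setOf_apply_eq_apply {ι : Type*} [Fintype ι] {i j : ι} (hij : i ≠ j) :
    volume {x : ι → ℝ | x i = x j} = 0 := by
  classical
  have hker : {x : ι → ℝ | x i = x j} =
      LinearMap.ker ((LinearMap.proj i : (ι → ℝ) →ₗ[ℝ] ℝ) - LinearMap.proj j) := by
    ext x
    simp [sub_eq_zero]
  rw [hker]
  refine Measure.addHaar_submodule _ _ fun htop => ?_
  have hmem : Pi.single j 1 ∈
      LinearMap.ker ((LinearMap.proj i : (ι → ℝ) →ₗ[ℝ] ℝ) - LinearMap.proj j) :=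
    htop ▸ Submodule.mem_top
  simp [Pi.single_eq_of_ne hij] at hmem

variable {α : Type*} [MeasurableSpace α] {μ : Measure α}

lemma eLpNorm_le_of_bound_of_bound_off {E : Type*} [NormedAddCommGroup E] {f : α → E}
    {p : ℝ≥0∞} (hp : 1 ≤ p) (hf : AEStronglyMeasurable f μ) {B : Set α} (hB : MeasurableSet B)
    {C η : ℝ} (hC : ∀ᵐ x ∂μ, ‖f x‖ ≤ C) (hη : ∀ᵐ x ∂μ, x ∉ B → ‖f x‖ ≤ η) :
    eLpNorm f p μ ≤
      μ B ^ p.toReal⁻¹ * ENNReal.ofReal C + μ univ ^ p.toReal⁻¹ * ENNReal.ofReal η := by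
  calc eLpNorm f p μ = eLpNorm (B.indicator f + Bᶜ.indicator f) p μ := by
        rw [indicator_self_add_compl]
    _ ≤ eLpNorm f p (μ.restrict B) + eLpNorm f p (μ.restrict Bᶜ) := by
        rw [← eLpNorm_indicator_eq_eLpNorm_restrict hB,
          ← eLpNorm_indicator_eq_eLpNorm_restrict hB.compl]
        exact eLpNorm_add_le (hf.indicator hB) (hf.indicator hB.compl) hp
    _ ≤ _ := by
        gcongr
        · exact (eLpNorm_le_of_ae_bound (ae_restrict_of_ae hC)).trans_eq
            (by rw [Measure.restrict_apply_univ])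
        · refine (eLpNorm_le_of_ae_bound ((ae_restrict_iff' hB.compl).mpr hη)).trans ?_
          gcongr
          exact Measure.restrict_le_self

variable [IsFiniteMeasure μ]

lemma tendsto_measure_preimage_closedBall {h : α → ℝ} (hh : Measurable h) {c : ℝ}
    (hc : μ (h ⁻¹' {c}) = 0) :
    Tendsto (fun θ => μ (h ⁻¹' closedBall c θ)) (𝓝[>] 0) (𝓝 0) := by
  have hlim := tendsto_measure_cthickening_of_isClosed (μ := μ.map h)
    ⟨1, one_pos, measure_ne_top _ _⟩ (isClosed_singleton (x := c))
  rw [Measure.map_apply hh (measurableSet_singleton c), hc] at hlim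
  refine (hlim.mono_left nhdsWithin_le_nhds).congr' ?_
  filter_upwards [self_mem_nhdsWithin] with θ hθ
  rw [cthickening_singleton c (le_of_lt hθ), Measure.map_apply hh measurableSet_closedBall]

lemma tendsto_measure_biUnion_preimage_closedBall {ι : Type*} (s : Finset ι)
    {h : ι → α → ℝ} (hh : ∀ i ∈ s, Measurable (h i)) {c : ι → ℝ}
    (hc : ∀ i ∈ s, μ (h i ⁻¹' {c i}) = 0) :
    Tendsto (fun θ => μ (⋃ i ∈ s, h i ⁻¹' closedBall (c i) θ)) (𝓝[>] 0) (𝓝 0) := by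
  have hsum := tendsto_finsetSum s fun i hi =>
    tendsto_measure_preimage_closedBall (hh i hi) (hc i hi)
  rw [Finset.sum_const_zero] at hsum
  exact tendsto_of_tendsto_of_tendsto_of_le_of_le tendsto_const_nhds hsum (fun _ => bot_le)
    fun _ => measure_biUnion_finset_le s _

lemma exists_pos_mul_le {f : ℝ → ℝ≥0∞} (hf : Tendsto f (𝓝[>] 0) (𝓝 0)) {c : ℝ≥0∞}
    (hc : c ≠ ∞) {ε : ℝ≥0∞} (hε : ε ≠ 0) : ∃ θ > 0, f θ * c ≤ ε := by
  have h := ENNReal.Tendsto.mul_const hf (Or.inr hc)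
  rw [zero_mul] at h
  obtain ⟨θ, hθε, hθ⟩ :=
    ((h.eventually (ge_mem_nhds (pos_iff_ne_zero.mpr hε))).and self_mem_nhdsWithin).exists
  exact ⟨θ, hθ, hθε⟩

lemma exists_pos_forall_eLpNorm_le (E : Type*) [NormedAddCommGroup E] {p : ℝ≥0∞} (hp : 1 ≤ p)
    (hp_top : p ≠ ∞) {ε : ℝ} (hε : 0 < ε) :
    ∃ η > 0, ∀ {B : ℝ → Set α}, Tendsto (fun θ => μ (B θ)) (𝓝[>] 0) (𝓝 0) → ∀ C : ℝ,
      ∃ θ > 0, ∀ {f : α → E}, AEStronglyMeasurable f μ → MeasurableSet (B θ) →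
        (∀ᵐ x ∂μ, ‖f x‖ ≤ C) → (∀ᵐ x ∂μ, x ∉ B θ → ‖f x‖ ≤ η) →
        eLpNorm f p μ ≤ ENNReal.ofReal ε := by
  have hq : 0 < p.toReal⁻¹ :=
    inv_pos.mpr (ENNReal.toReal_pos (zero_lt_one.trans_le hp).ne' hp_top)
  have hε2 : ENNReal.ofReal (ε / 2) ≠ 0 := by simpa using hε
  obtain ⟨η, hη, hηε⟩ := exists_pos_mul_le
    (ENNReal.continuous_ofReal.tendsto' 0 0 ENNReal.ofReal_zero |>.mono_left nhdsWithin_le_nhds)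
    (ENNReal.rpow_ne_top_of_nonneg hq.le (measure_ne_top μ univ)) hε2
  refine ⟨η, hη, fun hB C => ?_⟩
  obtain ⟨θ, hθ, hθε⟩ := exists_pos_mul_le (c := ENNReal.ofReal C)
    ((ENNReal.continuous_rpow_const.tendsto' 0 0 (ENNReal.zero_rpow_of_pos hq)).comp hB)
    ENNReal.ofReal_ne_top hε2
  refine ⟨θ, hθ, fun hf hBm hC hηB => (eLpNorm_le_of_bound_of_bound_off hp hf hBm hC hηB).trans ?_⟩
  calc _ ≤ ENNReal.ofReal (ε / 2) + ENNReal.ofReal (ε / 2) :=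
        add_le_add hθε (by rwa [mul_comm])
    _ = ENNReal.ofReal ε := by
        rw [← ENNReal.ofReal_add (by positivity) (by positivity), add_halves]

end Measure

section ExceptionalSet

variable {n : ℕ} (F : (Fin n → ℝ) → ℝ) (D : Finset ℝ)

def exceptionalSet (θ : ℝ) : Set (Fin n → ℝ) :=
  (⋃ ij ∈ (Finset.univ : Finset (Fin n)).offDiag,
      (fun x => x ij.1 - x ij.2) ⁻¹' closedBall 0 θ) ∪ ⋃ d ∈ D, F ⁻¹' closedBall d θ

lemma isClosed_exceptionalSet (hF : Continuous F) (θ : ℝ) : IsClosed (exceptionalSet F D θ) :=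
  (isClosed_biUnion_finset fun _ _ => isClosed_closedBall.preimage (by fun_prop)).union
    (isClosed_biUnion_finset fun _ _ => isClosed_closedBall.preimage hF)

variable {F D}

lemma lt_abs_sub_of_notMem_exceptionalSet {θ : ℝ} {x : Fin n → ℝ}
    (hx : x ∉ exceptionalSet F D θ) :
    (∀ i j, i ≠ j → θ < |x i - x j|) ∧ ∀ d ∈ D, θ < |F x - d| := by
  simpa [exceptionalSet, Real.dist_eq, not_or] using hx

lemma tendsto_measure_exceptionalSet {μ : Measure (Fin n → ℝ)} [IsFiniteMeasure μ]
    (hμ : μ ≪ volume) (hF : Measurable F) (hD : ∀ d ∈ D, μ (F ⁻¹' {d}) = 0) :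
    Tendsto (fun θ => μ (exceptionalSet F D θ)) (𝓝[>] 0) (𝓝 0) := by
  have hcoll := tendsto_measure_biUnion_preimage_closedBall (μ := μ)
    (Finset.univ : Finset (Fin n)).offDiag (h := fun ij x => x ij.1 - x ij.2) (c := fun _ => 0)
    (fun _ _ => by fun_prop) fun ij hij => hμ <| by
      convert volume_setOf_apply_eq_apply (Finset.mem_offDiag.mp hij).2.2 using 2
      ext x
      simp [sub_eq_zero]
  have hsum := hcoll.add (tendsto_measure_biUnion_preimage_closedBall D (fun _ _ => hF) hD)
  rw [add_zero] at hsum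
  exact tendsto_of_tendsto_of_tendsto_of_le_of_le tendsto_const_nhds hsum (fun _ => bot_le)
    fun _ => measure_union_le _ _

end ExceptionalSet

theorem approximating_equivariant_mapping_is_sufficient_general
    (n : ℕ) (G : Subgroup (Equiv.Perm (Fin n)))
    (p : ℝ) (hp : 1 ≤ p)
    (F : (Fin n → ℝ) → ℝ) (hFc : Continuous F) (hFinv : IsInvariant G F)
    (g : (Fin n → ℝ) → ℝ) (hgLip : IsLip g) (hginv : IsInvariant G g)
    (hrange : Set.range F ⊆ Set.range g) :
    ∀ K : Set (Fin n → ℝ), IsCompact K → ∀ ε : ℝ, 0 < ε →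
      ∃ φ : (Fin n → ℝ) → (Fin n → ℝ), Continuous φ ∧ IsEquivariant G φ ∧
        lpErr p K (fun x => F x - g (φ x)) ≤ ENNReal.ofReal ε := by
  intro K hK ε hε
  have : IsFiniteMeasure (volume.restrict K) := isFiniteMeasure_restrict.mpr hK.measure_lt_top.ne
  obtain ⟨η, hη, hsmall⟩ := exists_pos_forall_eLpNorm_le (μ := volume.restrict K) ℝ
    (ENNReal.one_le_ofReal.mpr hp) ENNReal.ofReal_ne_top hε
  obtain ⟨C₁, hC₁⟩ := hK.exists_bound_of_continuousOn hFc.continuousOn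
  obtain ⟨D, hDatom, R, hR⟩ := exists_rampCurve_approx g
    (Measure.countable_meas_level_set_pos (μ := volume.restrict K) hFc.measurable) C₁ hη
  have hgc : Continuous g := hgLip.choose_spec.continuous
  obtain ⟨C₂, hC₂⟩ := (isCompact_closedBall (0 : Fin n → ℝ) R).exists_bound_of_continuousOn
    hgc.continuousOn
  obtain ⟨θ, hθ, hθε⟩ := hsmall (tendsto_measure_exceptionalSet
    Measure.absolutelyContinuous_restrict hFc.measurable
    fun d hd => nonpos_iff_eq_zero.mp (not_lt.mp (hDatom d hd))) (C₁ + C₂)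
  obtain ⟨γ, hγc, hγR, hγ⟩ := hR θ hθ
  set φ := equivariantLift G θ (γ ∘ F)
  have hφc : Continuous φ := continuous_equivariantLift G θ _ (hγc.comp hFc)
  refine ⟨φ, hφc, isEquivariant_equivariantLift G θ _ fun k hk x => by simp [hFinv k hk x],
    hθε (hFc.sub (hgc.comp hφc)).aestronglyMeasurable
      (isClosed_exceptionalSet F D hFc θ).measurableSet
      (ae_restrict_of_forall_mem hK.measurableSet fun x hx => ?_)
      (ae_restrict_of_forall_mem hK.measurableSet fun x hx hxD => ?_)⟩
  · refine (norm_sub_le _ _).trans (add_le_add (hC₁ x hx) (hC₂ _ ?_))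
    exact mem_closedBall_zero_iff.mpr ((norm_equivariantLift_le G _ hθ.le x).trans (hγR _))
  · obtain ⟨hsep, hfar⟩ := lt_abs_sub_of_notMem_exceptionalSet hxD
    have hgφ : g (φ x) = g (γ (F x)) :=
      apply_equivariantLift G (γ ∘ F) hginv hθ fun i j hij => (hsep i j hij).le
    rw [hgφ, Real.norm_eq_abs]
    exact hγ _ (hrange ⟨x, rfl⟩) (hC₁ x hx) hfar

/-- an invariant continuous `F` whose range is covered by the range of a
Lipschitz invariant `g` can be written, up to `ε` in `L^p(K)`, as `g ∘ φ` with `φ`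
a continuous equivariant mapping. -/
theorem approximating_equivariant_mapping_is_sufficient
    (n : ℕ) (G : Subgroup (Equiv.Perm (Fin n))) (hG : IsTransitive G)
    (p : ℝ) (hp : 1 ≤ p)
    (F : (Fin n → ℝ) → ℝ) (hFc : Continuous F) (hFinv : IsInvariant G F)
    (g : (Fin n → ℝ) → ℝ) (hgLip : IsLip g) (hginv : IsInvariant G g)
    (hrange : Set.range F ⊆ Set.range g) :
    ∀ K : Set (Fin n → ℝ), IsCompact K → ∀ ε : ℝ, 0 < ε →
      ∃ φ : (Fin n → ℝ) → (Fin n → ℝ), Continuous φ ∧ IsEquivariant G φ ∧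
        lpErr p K (fun x => F x - g (φ x)) ≤ ENNReal.ofReal ε :=
  approximating_equivariant_mapping_is_sufficient_general n G p hp F hFc hFinv g hgLip hginv hrange

end SymDyn
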